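/- arXiv:2205.15132 — 18 statements merged into one kernel-verified Lean document; each statement's English description precedes it below -/
import Mathlib

section
/- Let R be a unital ring with involution and let a ∈ R be Moore-Penrose invertible with Moore-Penrose inverse a†. For g ∈ R the following are equivalent: (i) g = a⁻ a a† for some {1}-inverse a⁻ of a (i.e., g is a 1MP-inverse of a); (ii) g a g = g and a g = a a†; (iii) g is a {1,2,3}-inverse of a (i.e., a g a = a, g a g = g, and (a g)* = a g). -/
/-- 1MP-inverses coincide with solutions of `xax = x, ax = a a†` and with
`{1,2,3}`-inverses, for `a` Moore-Penrose invertible in a ring with involution. -/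
theorem stmt_0 {R : Type*} [Ring R] [StarRing R] (a ad g : R)
    (h1 : a * ad * a = a) (h2 : ad * a * ad = ad)
    (h3 : star (a * ad) = a * ad) (h4 : star (ad * a) = ad * a) :
    ((∃ am : R, a * am * a = a ∧ g = am * a * ad) ↔
      (g * a * g = g ∧ a * g = a * ad)) ∧
    ((g * a * g = g ∧ a * g = a * ad) ↔
      (a * g * a = a ∧ g * a * g = g ∧ star (a * g) = a * g)) := by
  constructor
  · constructor
    · rintro ⟨am, ham, rfl⟩
      have hag : a * (am * a * ad) = a * ad := by
        calc a * (am * a * ad) = (a * am * a) * ad := by noncomm_ring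
          _ = a * ad := by rw [ham]
      refine ⟨?_, hag⟩
      calc am * a * ad * a * (am * a * ad)
          = am * (a * ad * a) * (am * a * ad) := by noncomm_ring
        _ = am * a * (am * a * ad) := by rw [h1]
        _ = am * (a * (am * a * ad)) := by noncomm_ring
        _ = am * (a * ad) := by rw [hag]
        _ = am * a * ad := by noncomm_ring
    · rintro ⟨hg1, hg2⟩
      refine ⟨g, ?_, ?_⟩
      · calc a * g * a = a * ad * a := by rw [hg2]
          _ = a := h1
      · calc g = g * a * g := hg1.symm
          _ = g * (a * g) := by noncomm_ring
          _ = g * (a * ad) := by rw [hg2]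
          _ = g * a * ad := by noncomm_ring
  · constructor
    · rintro ⟨hg1, hg2⟩
      refine ⟨?_, hg1, ?_⟩
      · rw [hg2]; exact h1
      · rw [hg2]; exact h3
    · rintro ⟨hg1, hg2, hg3⟩
      have key : a * g = a * ad := by
        calc a * g = (a * ad * a) * g := by rw [h1]
          _ = (a * ad) * (a * g) := by noncomm_ring
          _ = star (a * g * (a * ad)) := by rw [star_mul, h3, hg3]
          _ = star (a * g * a * ad) := by noncomm_ring
          _ = star (a * ad) := by rw [hg1]
          _ = a * ad := h3
      exact ⟨hg2, key⟩
end

section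
/- Let R be a unital ring with involution and let a ∈ R possess a {1,3}-inverse. Then a{1,2,3} = a{1}·a·a{1,3}, i.e., g is a {1,2,3}-inverse of a if and only if g = x a y for some {1}-inverse x of a and some {1,3}-inverse y of a. -/
/-- `a{1,2,3} = a{1} · a · a{1,3}` in a ring with involution, provided `a` has
a `{1,3}`-inverse. -/
theorem stmt_1 {R : Type*} [Ring R] [StarRing R] (a : R)
    (ha : ∃ y : R, a * y * a = a ∧ star (a * y) = a * y) (g : R) :
    (a * g * a = a ∧ g * a * g = g ∧ star (a * g) = a * g) ↔
    ∃ x y : R, a * x * a = a ∧ (a * y * a = a ∧ star (a * y) = a * y) ∧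
      g = x * a * y := by
  constructor
  · rintro ⟨h1, h2, h3⟩
    exact ⟨g, g, h1, ⟨h1, h3⟩, h2.symm⟩
  · rintro ⟨x, y, hx, ⟨hy1, hy3⟩, rfl⟩
    have hag : a * (x * a * y) = a * y := by
      calc a * (x * a * y) = (a * x * a) * y := by noncomm_ring
        _ = a * y := by rw [hx]
    refine ⟨?_, ?_, ?_⟩
    · calc a * (x * a * y) * a = a * y * a := by rw [hag]
        _ = a := hy1
    · calc x * a * y * a * (x * a * y) = x * (a * y * a) * (x * a * y) := by noncomm_ring
        _ = x * (a * (x * a * y)) := by rw [hy1]; noncomm_ring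
        _ = x * (a * y) := by rw [hag]
        _ = x * a * y := by noncomm_ring
    · rw [hag, hy3]
end

section
/- Let R be a unital ring with involution, let a ∈ R, and let h be a fixed {1,2,3}-inverse of a. Then a{1,2,3} = { h + (1 − h a) w a h : w ∈ R }, i.e., g is a {1,2,3}-inverse of a if and only if g = h + (1 − h a) w a h for some w ∈ R. -/
/-- `a{1,2,3} = { h + (1 - h a) w a h : w ∈ R }` where `h` is a fixed
`{1,2,3}`-inverse of `a`. -/
theorem stmt_2 {R : Type*} [Ring R] [StarRing R] (a h : R)
    (hh : a * h * a = a ∧ h * a * h = h ∧ star (a * h) = a * h) (g : R) :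
    (a * g * a = a ∧ g * a * g = g ∧ star (a * g) = a * g) ↔
    ∃ w : R, g = h + (1 - h * a) * w * a * h := by
  obtain ⟨h1, h2, h3⟩ := hh
  constructor
  · rintro ⟨g1, g2, g3⟩
    -- key fact : a*g = a*h
    have e1 : a * h = (a * g) * (a * h) := by
      calc a * h = (a * g * a) * h := by rw [g1]
        _ = (a * g) * (a * h) := by noncomm_ring
    have e2 : a * g = (a * h) * (a * g) := by
      calc a * g = (a * h * a) * g := by rw [h1]
        _ = (a * h) * (a * g) := by noncomm_ring
    have e3 : a * g = (a * g) * (a * h) := by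
      calc a * g = star (a * g) := g3.symm
        _ = star ((a * h) * (a * g)) := by rw [← e2]
        _ = star (a * g) * star (a * h) := by rw [star_mul]
        _ = (a * g) * (a * h) := by rw [g3, h3]
    have hag : a * g = a * h := by rw [e3, ← e1]
    have hgah : g * (a * h) = g := by
      rw [← hag, ← mul_assoc]; exact g2
    refine ⟨g, ?_⟩
    have expand : h + (1 - h * a) * g * a * h
        = h + g * (a * h) - (h * (a * g)) * (a * h) := by noncomm_ring
    rw [expand, hag, hgah]
    have : (h * (a * h)) * (a * h) = h := by
      calc (h * (a * h)) * (a * h) = (h * a * h) * a * h := by noncomm_ring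
        _ = h := by rw [h2, h2]
    rw [this]; abel
  · rintro ⟨w, rfl⟩
    set G := h + (1 - h * a) * w * a * h with hG
    have hag : a * G = a * h := by
      calc a * G = a * h + (a - a * h * a) * (w * a * h) := by rw [hG]; noncomm_ring
        _ = a * h := by rw [h1]; noncomm_ring
    refine ⟨?_, ?_, ?_⟩
    · rw [hag]; exact h1
    · calc G * a * G = G * (a * G) := by rw [mul_assoc]
        _ = G * (a * h) := by rw [hag]
        _ = (h * a * h) + (1 - h * a) * w * a * (h * a * h) := by rw [hG]; noncomm_ring
        _ = G := by rw [h2, hG]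
    · rw [hag]; exact h3
end

section
/- Let R be a unital ring with involution and let a ∈ R possess a {1,2,3}-inverse. Then a{1,2,3} = { s a* : s is a {1}-inverse of a* a }, i.e., g is a {1,2,3}-inverse of a if and only if g = s a* for some s ∈ R with (a* a) s (a* a) = a* a. -/
/-- `a{1,2,3} = { s a* : s ∈ (a* a){1} }` in a ring with involution, provided `a`
has a `{1,2,3}`-inverse. -/
theorem stmt_3 {R : Type*} [Ring R] [StarRing R] (a : R)
    (ha : ∃ x : R, a * x * a = a ∧ x * a * x = x ∧ star (a * x) = a * x) (g : R) :
    (a * g * a = a ∧ g * a * g = g ∧ star (a * g) = a * g) ↔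
    ∃ s : R, (star a * a) * s * (star a * a) = star a * a ∧ g = s * star a := by
  obtain ⟨x, hx1, hx2, hx3⟩ := ha
  constructor
  · rintro ⟨h1, h2, h3⟩
    have key : star g * star a = a * g := by rw [← star_mul, h3]
    refine ⟨g * star g, ?_, ?_⟩
    · calc star a * a * (g * star g) * (star a * a)
          = star a * (a * g * (star g * star a * a)) := by simp only [mul_assoc]
        _ = star a * (a * g * (a * g * a)) := by rw [key]
        _ = star a * a := by rw [h1, h1]
    · calc g = g * a * g := h2.symm
        _ = g * (a * g) := by rw [mul_assoc]
        _ = g * (star g * star a) := by rw [key]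
        _ = g * star g * star a := by rw [mul_assoc]
  · rintro ⟨s, hs, rfl⟩
    have hxa : star x * (star a * a) = a := by
      calc star x * (star a * a) = star x * star a * a := by rw [mul_assoc]
        _ = star (a * x) * a := by rw [star_mul]
        _ = a * x * a := by rw [hx3]
        _ = a := hx1
    have h5 : a * s * (star a * a) = a := by
      calc a * s * (star a * a)
          = star x * (star a * a) * s * (star a * a) := by rw [hxa]
        _ = star x * (star a * a * s * (star a * a)) := by simp only [mul_assoc]
        _ = star x * (star a * a) := by rw [hs]
        _ = a := hxa
    have h5' : a * s * star a * a = a := by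
      simp only [mul_assoc] at h5 ⊢; exact h5
    have h6 : star a * (a * (star s * star a)) = star a := by
      have h := congrArg star h5'
      simp only [star_mul, star_star, mul_assoc] at h
      exact h
    have hpp : (a * s * star a) * (a * star s * star a) = a * star s * star a := by
      calc (a * s * star a) * (a * star s * star a)
          = (a * s * star a * a) * star s * star a := by simp only [mul_assoc]
        _ = a * star s * star a := by rw [h5']
    have hps : star (a * s * star a) = a * star s * star a := by
      simp only [star_mul, star_star, mul_assoc]
    have hpp' : (a * s * star a) * star (a * s * star a) = star (a * s * star a) := by
      rw [hps]; exact hpp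
    have hp : star (a * s * star a) = a * s * star a := by
      have h8 := congrArg star hpp'
      rw [star_mul, star_star] at h8
      exact hpp'.symm.trans h8
    have h9 : star a * (a * (s * star a)) = star a := by
      calc star a * (a * (s * star a))
          = star a * (a * s * star a) := by simp only [mul_assoc]
        _ = star a * star (a * s * star a) := by rw [hp]
        _ = star a * (a * star s * star a) := by rw [hps]
        _ = star a * (a * (star s * star a)) := by simp only [mul_assoc]
        _ = star a := h6
    refine ⟨?_, ?_, ?_⟩
    · calc a * (s * star a) * a = a * s * (star a * a) := by simp only [mul_assoc]
        _ = a := h5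
    · calc s * star a * a * (s * star a)
          = s * (star a * (a * (s * star a))) := by simp only [mul_assoc]
        _ = s * star a := by rw [h9]
    · have : star (a * (s * star a)) = a * (s * star a) := by
        rw [← mul_assoc]; exact hp
      exact this
end

section
/- Let R be a unital ring with involution and a, b ∈ R. Then a <^{−†} b if and only if there exists a {1,3}-inverse g of a with a g = b g and g a = g b. Moreover, a <^{−†} b implies a <⁻ b (the minus order). -/
/-- `a <^{-†} b` iff there is a `{1,3}`-inverse `g` of `a` with `ag = bg` and
`ga = gb`; moreover `a <^{-†} b` implies `a <⁻ b`. -/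
theorem stmt_4 {R : Type*} [Ring R] [StarRing R] (a b : R) :
    ((∃ g : R, (a * g * a = a ∧ g * a * g = g ∧ star (a * g) = a * g) ∧
        a * g = b * g ∧ g * a = g * b) ↔
      (∃ g : R, (a * g * a = a ∧ star (a * g) = a * g) ∧
        a * g = b * g ∧ g * a = g * b)) ∧
    ((∃ g : R, (a * g * a = a ∧ g * a * g = g ∧ star (a * g) = a * g) ∧
        a * g = b * g ∧ g * a = g * b) →
      ∃ x : R, a * x * a = a ∧ a * x = b * x ∧ x * a = x * b) := by
  constructor
  · constructor
    · rintro ⟨g, ⟨h1, _, h3⟩, h4, h5⟩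
      exact ⟨g, ⟨h1, h3⟩, h4, h5⟩
    · rintro ⟨g, ⟨h1, h3⟩, h4, h5⟩
      have key : a * (g * a * g) = a * g := by
        calc a * (g * a * g) = (a * g * a) * g := by noncomm_ring
        _ = a * g := by rw [h1]
      refine ⟨g * a * g, ⟨?_, ?_, ?_⟩, ?_, ?_⟩
      · calc a * (g * a * g) * a = (a * g * a) * (g * a) := by noncomm_ring
        _ = a * (g * a) := by rw [h1]
        _ = (a * g * a) := by noncomm_ring
        _ = a := h1
      · calc g * a * g * a * (g * a * g)
            = g * ((a * g * a) * (g * (a * g))) := by noncomm_ring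
          _ = g * (a * (g * (a * g))) := by rw [h1]
          _ = g * ((a * g * a) * g) := by noncomm_ring
          _ = g * (a * g) := by rw [h1]
          _ = g * a * g := by noncomm_ring
      · rw [key, h3]
      · rw [key]
        calc a * g = (a * g * a) * g := by rw [h1]
          _ = (a * g) * (a * g) := by noncomm_ring
          _ = (b * g) * (a * g) := by rw [h4]
          _ = b * (g * a * g) := by noncomm_ring
      · calc g * a * g * a = (g * a) * (g * a) := by noncomm_ring
          _ = (g * a) * (g * b) := by rw [h5]
          _ = g * a * g * b := by noncomm_ring
  · rintro ⟨g, ⟨h1, _, _⟩, h4, h5⟩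
    exact ⟨g, h1, h4, h5⟩
end

section
/- Let R be a unital ring with involution, let a ∈ R possess a {1,3}-inverse, and let b ∈ R. Then a <^{−†} b if and only if a *≤ b; that is, there exists a {1,2,3}-inverse g of a with a g = b g and g a = g b if and only if a* a = a* b and a = b c for some c ∈ R. -/
/-- For `a` possessing a `{1,3}`-inverse, `a <^{-†} b` iff `a *≤ b` (left-star order). -/
theorem stmt_6 {R : Type*} [Ring R] [StarRing R] (a b : R)
    (ha : ∃ x : R, a * x * a = a ∧ star (a * x) = a * x) :
    (∃ g : R, (a * g * a = a ∧ g * a * g = g ∧ star (a * g) = a * g) ∧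
      a * g = b * g ∧ g * a = g * b) ↔
    (star a * a = star a * b ∧ ∃ c : R, a = b * c) := by
  constructor
  · rintro ⟨g, ⟨h1, h2, h3⟩, h4, h5⟩
    have hs : star a = star a * (a * g) := by
      conv_lhs => rw [← h1]
      rw [star_mul, h3]
    constructor
    · calc star a * a = star a * (a * g) * a := by rw [← hs]
        _ = star a * a * (g * a) := by simp only [mul_assoc]
        _ = star a * a * (g * b) := by rw [h5]
        _ = star a * (a * g) * b := by simp only [mul_assoc]
        _ = star a * b := by rw [← hs]
    · exact ⟨g * a, by rw [← mul_assoc, ← h4, h1]⟩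
  · rintro ⟨hab, c, hc⟩
    obtain ⟨x, hx1, hx3⟩ := ha
    have haxb : a * x * b = a := by
      calc a * x * b = star (a * x) * b := by rw [hx3]
        _ = star x * (star a * b) := by rw [star_mul, mul_assoc]
        _ = star x * (star a * a) := by rw [hab]
        _ = star (a * x) * a := by rw [star_mul, mul_assoc]
        _ = a * x * a := by rw [hx3]
        _ = a := hx1
    have hac : a * c = a := by
      calc a * c = a * x * b * c := by rw [haxb]
        _ = a * x * (b * c) := by simp only [mul_assoc]
        _ = a * x * a := by rw [← hc]
        _ = a := hx1
    refine ⟨c * x * a * x, ⟨?_, ?_, ?_⟩, ?_, ?_⟩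
    · calc a * (c * x * a * x) * a = a * c * x * a * x * a := by simp only [mul_assoc]
        _ = a * x * a * x * a := by rw [hac]
        _ = a := by rw [hx1, hx1]
    · calc c * x * a * x * a * (c * x * a * x)
          = c * x * (a * x * a) * ((c * x) * (a * x)) := by simp only [mul_assoc]
        _ = c * x * a * ((c * x) * (a * x)) := by rw [hx1]
        _ = c * x * (a * c) * x * (a * x) := by simp only [mul_assoc]
        _ = c * x * a * x * (a * x) := by rw [hac]
        _ = c * x * (a * x * a) * x := by simp only [mul_assoc]
        _ = c * x * (a * x) := by rw [hx1, mul_assoc]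
        _ = c * x * a * x := by simp only [mul_assoc]
    · have hag : a * (c * x * a * x) = a * x := by
        calc a * (c * x * a * x) = (a * c) * x * a * x := by simp only [mul_assoc]
          _ = a * x * a * x := by rw [hac]
          _ = (a * x * a) * x := by simp only [mul_assoc]
          _ = a * x := by rw [hx1]
      rw [hag, hx3]
    · calc a * (c * x * a * x) = (a * c) * x * a * x := by simp only [mul_assoc]
        _ = a * x * a * x := by rw [hac]
        _ = (a * x * a) * x := by simp only [mul_assoc]
        _ = a * x := by rw [hx1]
        _ = (a * x * a) * x := by rw [hx1]
        _ = a * x * a * x := by simp only [mul_assoc]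
        _ = (b * c) * x * a * x := by rw [← hc]
        _ = b * (c * x * a * x) := by simp only [mul_assoc]
    · calc c * x * a * x * a = c * x * (a * x * a) := by simp only [mul_assoc]
        _ = c * x * a := by rw [hx1]
        _ = c * x * (a * x * b) := by rw [haxb]
        _ = c * x * a * x * b := by simp only [mul_assoc]
end

section
/- Let R be a unital ring with involution and let a ∈ R possess a {1,3}-inverse. Then for b ∈ R: a *≤ b (left-star order) if and only if b = a + (1 − a g) d (1 − g a) for some {1,2,3}-inverse g of a and some d ∈ R. -/
/-- For `a` with a `{1,3}`-inverse: `a *≤ b` iff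
`b = a + (1 - a g) d (1 - g a)` for some `{1,2,3}`-inverse `g` of `a` and `d ∈ R`. -/
theorem stmt_8 {R : Type*} [Ring R] [StarRing R] (a : R)
    (ha : ∃ x : R, a * x * a = a ∧ star (a * x) = a * x) (b : R) :
    (star a * a = star a * b ∧ ∃ c : R, a = b * c) ↔
    ∃ g d : R, (a * g * a = a ∧ g * a * g = g ∧ star (a * g) = a * g) ∧
      b = a + (1 - a * g) * d * (1 - g * a) := by
  obtain ⟨x, hx1, hx3⟩ := ha
  constructor
  · rintro ⟨hsb, c, hc⟩
    -- a * x * b = a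
    have haxb : a * x * b = a := by
      calc a * x * b = star (a * x) * b := by rw [hx3]
        _ = star x * (star a * b) := by rw [star_mul, mul_assoc]
        _ = star x * (star a * a) := by rw [← hsb]
        _ = star (a * x) * a := by rw [star_mul, mul_assoc]
        _ = a * x * a := by rw [hx3]
        _ = a := hx1
    -- a * c = a
    have hac : a * c = a := by
      calc a * c = (a * x * b) * c := by rw [haxb]
        _ = a * x * (b * c) := by rw [mul_assoc]
        _ = a * x * a := by rw [← hc]
        _ = a := hx1
    obtain ⟨g, hgdef⟩ : ∃ g : R, g = c * (x * (a * x)) := ⟨_, rfl⟩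
    have hag : a * g = a * x := by
      calc a * g = (a * c) * (x * (a * x)) := by rw [hgdef, mul_assoc]
        _ = a * (x * (a * x)) := by rw [hac]
        _ = (a * x * a) * x := by noncomm_ring
        _ = a * x := by rw [hx1]
    have haga : a * g * a = a := by rw [hag, hx1]
    have hgag : g * a * g = g := by
      calc g * a * g = c * (x * ((a * x * a) * (c * (x * (a * x))))) := by
            rw [hgdef]; noncomm_ring
        _ = c * (x * (a * (c * (x * (a * x))))) := by rw [hx1]
        _ = c * (x * ((a * c) * (x * (a * x)))) := by rw [mul_assoc]
        _ = c * (x * (a * (x * (a * x)))) := by rw [hac]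
        _ = c * (x * ((a * x * a) * x)) := by noncomm_ring
        _ = c * (x * (a * x)) := by rw [hx1]
        _ = g := by rw [hgdef]
    have hstar : star (a * g) = a * g := by rw [hag]; exact hx3
    have hbga : b * g * a = a := by
      calc b * g * a = (b * c) * (x * (a * x)) * a := by rw [hgdef]; noncomm_ring
        _ = a * (x * (a * x)) * a := by rw [← hc]
        _ = (a * x * a) * (x * a) := by noncomm_ring
        _ = a * (x * a) := by rw [hx1]
        _ = a := by rw [← mul_assoc, hx1]
    have hagb : a * g * b = a := by rw [hag, haxb]
    refine ⟨g, b - a, ⟨haga, hgag, hstar⟩, ?_⟩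
    have hX : (1 - a * g) * (b - a) = b - a := by
      have e : (1 - a * g) * (b - a) = b - a - (a * g * b - a * g * a) := by noncomm_ring
      rw [e, hagb, haga, sub_self, sub_zero]
    have hY : (b - a) * (1 - g * a) = b - a := by
      have e : (b - a) * (1 - g * a) = b - a - (b * (g * a) - a * (g * a)) := by noncomm_ring
      rw [e, ← mul_assoc, ← mul_assoc, hbga, haga, sub_self, sub_zero]
    rw [hX, hY, add_sub_cancel]
  · rintro ⟨g, d, ⟨hg1, hg2, hg3⟩, hb⟩
    constructor
    · have key : star a * (a * g) = star a := by
        calc star a * (a * g) = star a * star (a * g) := by rw [hg3]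
          _ = star (a * g * a) := by rw [← star_mul, mul_assoc]
          _ = star a := by rw [hg1]
      have h0 : star a * (1 - a * g) = 0 := by
        rw [mul_sub, mul_one, key, sub_self]
      calc star a * a = star a * a + (star a * (1 - a * g)) * d * (1 - g * a) := by
            rw [h0, zero_mul, zero_mul, add_zero]
        _ = star a * (a + (1 - a * g) * d * (1 - g * a)) := by noncomm_ring
        _ = star a * b := by rw [← hb]
    · refine ⟨g * a, ?_⟩
      have h1 : (1 - g * a) * (g * a) = 0 := by
        have e : (1 - g * a) * (g * a) = g * a - (g * a * g) * a := by noncomm_ring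
        rw [e, hg2, sub_self]
      calc a = a * g * a + (1 - a * g) * d * 0 := by rw [mul_zero, add_zero, hg1]
        _ = a * g * a + (1 - a * g) * d * ((1 - g * a) * (g * a)) := by rw [h1]
        _ = (a + (1 - a * g) * d * (1 - g * a)) * (g * a) := by noncomm_ring
        _ = b * (g * a) := by rw [← hb]
end

section
/- Let R be a unital ring with involution, let a ∈ R possess a {1,3}-inverse, let h be a fixed {1,2,3}-inverse of a, and set p = a h, q = h a. Then for b ∈ R: a *≤ b (left-star order) if and only if b = a + b₄ u + b₄ for some b₄ ∈ R with b₄ = (1 − p) b₄ (1 − q) and some u ∈ R with u = u q. -/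
/-- With `h` a fixed `{1,2,3}`-inverse of `a`, `p = a h`, `q = h a`:
`a *≤ b` iff `b = a + b₄ u + b₄` for some `b₄ = (1-p) b₄ (1-q)` and `u = u q`. -/
theorem stmt_9 {R : Type*} [Ring R] [StarRing R] (a h : R)
    (ha : ∃ x : R, a * x * a = a ∧ star (a * x) = a * x)
    (hh : a * h * a = a ∧ h * a * h = h ∧ star (a * h) = a * h) (b : R) :
    (star a * a = star a * b ∧ ∃ c : R, a = b * c) ↔
    ∃ b4 u : R, b4 = (1 - a * h) * b4 * (1 - h * a) ∧ u = u * (h * a) ∧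
      b = a + b4 * u + b4 := by
  obtain ⟨h1, h2, h3⟩ := hh
  have hp : star h * star a = a * h := by rw [← h3, star_mul]
  have hsa : star a * (a * h) = star a := by
    conv_rhs => rw [← h1]
    rw [star_mul, h3]
  have hpp : (a * h) * (a * h) = a * h := by rw [← mul_assoc, h1]
  have hqq : (h * a) * (h * a) = h * a := by rw [← mul_assoc, h2]
  have haq : a * (h * a) = a := by rw [← mul_assoc, h1]
  have hq0 : (1 - h * a) * (h * a) = 0 := by rw [sub_mul, one_mul, hqq, sub_self]
  constructor
  · rintro ⟨hs, c, hc⟩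
    have hpb : a * h * b = a := by
      calc a * h * b = star h * star a * b := by rw [hp]
        _ = star h * (star a * b) := mul_assoc _ _ _
        _ = star h * (star a * a) := by rw [hs]
        _ = star h * star a * a := (mul_assoc _ _ _).symm
        _ = a * h * a := by rw [hp]
        _ = a := h1
    have hac : a * c = a := by
      calc a * c = a * h * b * c := by rw [hpb]
        _ = a * h * (b * c) := by rw [mul_assoc]
        _ = a * h * a := by rw [← hc]
        _ = a := h1
    have h0 : (1 - a * h) * a = 0 := by rw [sub_mul, one_mul, h1, sub_self]
    have hxc : (1 - a * h) * b * (h * a) * c = (1 - a * h) * b * (h * a) := by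
      calc (1 - a * h) * b * (h * a) * c = (1 - a * h) * b * (h * (a * c)) := by
            noncomm_ring
        _ = (1 - a * h) * b * (h * a) := by rw [hac]
    have hxq : (1 - a * h) * b * (h * a) * (h * a) = (1 - a * h) * b * (h * a) := by
      calc (1 - a * h) * b * (h * a) * (h * a)
          = (1 - a * h) * b * ((h * a) * (h * a)) := by noncomm_ring
        _ = (1 - a * h) * b * (h * a) := by rw [hqq]
    have hb4c : (1 - a * h) * b * (1 - h * a) * c = -((1 - a * h) * b * (h * a)) := by
      have e1 : (1 - a * h) * b * (1 - h * a) * c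
          = (1 - a * h) * (b * c) - (1 - a * h) * b * (h * a) * c := by noncomm_ring
      rw [e1, ← hc, h0, hxc, zero_sub]
    refine ⟨(1 - a * h) * b * (1 - h * a), -(c * (h * a)), ?_, ?_, ?_⟩
    · calc (1 - a * h) * b * (1 - h * a)
          = ((1 - a * h) * (1 - a * h)) * b * ((1 - h * a) * (1 - h * a)) := by
            have e2 : (1 - a * h) * (1 - a * h) = 1 - a * h := by
              have : (1 - a * h) * (1 - a * h) = 1 - a * h - a * h + (a*h)*(a*h) := by
                noncomm_ring
              rw [this, hpp]; abel
            have e3 : (1 - h * a) * (1 - h * a) = 1 - h * a := by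
              have : (1 - h * a) * (1 - h * a) = 1 - h * a - h * a + (h*a)*(h*a) := by
                noncomm_ring
              rw [this, hqq]; abel
            rw [e2, e3]
        _ = (1 - a * h) * ((1 - a * h) * b * (1 - h * a)) * (1 - h * a) := by
            noncomm_ring
    · rw [neg_mul, mul_assoc, hqq]
    · have hb4u : (1 - a * h) * b * (1 - h * a) * -(c * (h * a))
          = (1 - a * h) * b * (h * a) := by
        calc (1 - a * h) * b * (1 - h * a) * -(c * (h * a))
            = -((1 - a * h) * b * (1 - h * a) * c * (h * a)) := by noncomm_ring
          _ = -(-((1 - a * h) * b * (h * a)) * (h * a)) := by rw [hb4c]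
          _ = (1 - a * h) * b * (h * a) * (h * a) := by rw [neg_mul, neg_neg]
          _ = (1 - a * h) * b * (h * a) := hxq
      rw [hb4u]
      have e : a + (1 - a * h) * b * (h * a) + (1 - a * h) * b * (1 - h * a)
          = a + b - a * h * b := by noncomm_ring
      rw [e, hpb]; abel
  · rintro ⟨b4, u, hb4, hu, hb⟩
    have h0 : star a * (1 - a * h) = 0 := by rw [mul_sub, mul_one, hsa, sub_self]
    have hab4 : star a * b4 = 0 := by
      rw [hb4]
      calc star a * ((1 - a * h) * b4 * (1 - h * a))
          = (star a * (1 - a * h)) * b4 * (1 - h * a) := by noncomm_ring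
        _ = 0 := by rw [h0, zero_mul, zero_mul]
    have hb4q : b4 * (h * a) = 0 := by
      rw [hb4]
      calc (1 - a * h) * b4 * (1 - h * a) * (h * a)
          = (1 - a * h) * b4 * ((1 - h * a) * (h * a)) := by noncomm_ring
        _ = 0 := by rw [hq0, mul_zero]
    constructor
    · rw [hb]
      symm
      calc star a * (a + b4 * u + b4)
          = star a * a + (star a * b4) * u + star a * b4 := by noncomm_ring
        _ = star a * a := by rw [hab4, zero_mul, add_zero, add_zero]
    · refine ⟨h * a - (1 - h * a) * u, ?_⟩
      have hbq : b * (h * a) = a + b4 * u := by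
        rw [hb]
        calc (a + b4 * u + b4) * (h * a)
            = a * (h * a) + b4 * (u * (h * a)) + b4 * (h * a) := by noncomm_ring
          _ = a + b4 * u := by rw [haq, ← hu, hb4q, add_zero]
      have hb1q : b * (1 - h * a) = b4 := by
        rw [mul_sub, mul_one, hbq, hb]; abel
      calc a = (a + b4 * u) - b4 * u := by abel
        _ = b * (h * a) - (b * (1 - h * a)) * u := by rw [hbq, hb1q]
        _ = b * (h * a - (1 - h * a) * u) := by noncomm_ring
end

section
/- Let R be a unital ring with involution, let a ∈ R possess a {1,3}-inverse, and let b ∈ R. Then a *≤ b (left-star order) if and only if there exist a self-adjoint idempotent p (p² = p = p*) and an idempotent q (q² = q) such that a = p b and a = b q. -/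
/-- For `a` with a `{1,3}`-inverse: `a *≤ b` iff `a = p b = b q` for some
self-adjoint idempotent `p` and idempotent `q`. -/
theorem stmt_10 {R : Type*} [Ring R] [StarRing R] (a : R)
    (ha : ∃ x : R, a * x * a = a ∧ star (a * x) = a * x) (b : R) :
    (star a * a = star a * b ∧ ∃ c : R, a = b * c) ↔
    ∃ p q : R, p * p = p ∧ star p = p ∧ q * q = q ∧ a = p * b ∧ a = b * q := by
  obtain ⟨x, h1, h2⟩ := ha
  constructor
  · rintro ⟨hab, c, hc⟩
    have key : a * x * b = a := by
      calc a * x * b = star (a * x) * b := by rw [h2]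
        _ = star x * (star a * b) := by rw [star_mul, mul_assoc]
        _ = star x * (star a * a) := by rw [← hab]
        _ = star (a * x) * a := by rw [star_mul, mul_assoc]
        _ = a * x * a := by rw [h2]
        _ = a := h1
    have hac : a * c = a := by
      calc a * c = a * x * b * c := by rw [key]
        _ = a * x * (b * c) := by rw [mul_assoc]
        _ = a * x * a := by rw [← hc]
        _ = a := h1
    refine ⟨a * x, c * (x * a), ?_, h2, ?_, key.symm, ?_⟩
    · calc a * x * (a * x) = a * x * a * x := by rw [← mul_assoc]
        _ = a * x := by rw [h1]
    · have : a * (c * (x * a)) = a * (x * a) := by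
        rw [← mul_assoc, hac]
      calc c * (x * a) * (c * (x * a)) = c * (x * (a * (c * (x * a)))) := by
            simp only [mul_assoc]
        _ = c * (x * (a * (x * a))) := by rw [this]
        _ = c * (x * (a * x * a)) := by simp only [mul_assoc]
        _ = c * (x * a) := by rw [h1]
    · calc a = a * x * a := h1.symm
        _ = b * c * x * a := by rw [← hc]
        _ = b * (c * (x * a)) := by simp only [mul_assoc]
  · rintro ⟨p, q, hpp, hps, hqq, hpb, hbq⟩
    refine ⟨?_, q, hbq⟩
    calc star a * a = star (p * b) * (p * b) := by rw [← hpb]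
      _ = star b * (star p * p) * b := by rw [star_mul]; simp only [mul_assoc]
      _ = star b * (p * p) * b := by rw [hps]
      _ = star b * p * b := by rw [hpp]
      _ = star (p * b) * b := by rw [star_mul, hps]
      _ = star a * b := by rw [← hpb]
end

section
/- Let R be a unital ring with involution and let a, b ∈ R each possess a {1,3}-inverse. If a *≤ b (left-star order), then: (i) for every {1,2,3}-inverse h of b, the element h a h is a {1,2,3}-inverse of a (the (T)-condition); and (ii) every {1,3}-inverse of b is a {1,3}-inverse of a, i.e., b{1,3} ⊆ a{1,3}. -/
/-- If `a *≤ b` (with `a`, `b` each possessing a `{1,3}`-inverse), then the pair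
`(a,b)` satisfies the (T)-condition and `b{1,3} ⊆ a{1,3}`. -/
theorem stmt_11 {R : Type*} [Ring R] [StarRing R] (a b : R)
    (ha : ∃ x : R, a * x * a = a ∧ star (a * x) = a * x)
    (hb : ∃ x : R, b * x * b = b ∧ star (b * x) = b * x)
    (hab : star a * a = star a * b ∧ ∃ c : R, a = b * c) :
    (∀ h : R, (b * h * b = b ∧ h * b * h = h ∧ star (b * h) = b * h) →
      (a * (h * a * h) * a = a ∧ (h * a * h) * a * (h * a * h) = h * a * h ∧
        star (a * (h * a * h)) = a * (h * a * h))) ∧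
    (∀ h : R, (b * h * b = b ∧ star (b * h) = b * h) →
      (a * h * a = a ∧ star (a * h) = a * h)) := by
  obtain ⟨x, hx1, hx2⟩ := ha
  obtain ⟨hab1, c, hc⟩ := hab
  -- star a = star a * (a * x)
  have hstara : star a = star a * (a * x) := by
    have := congrArg star hx1
    rw [star_mul, hx2] at this
    exact this.symm
  -- star b * a = star a * a
  have hba : star b * a = star a * a := by
    have := congrArg star hab1
    rw [star_mul, star_mul, star_star] at this
    exact this.symm
  -- the key computation: for any {1,3}-inverse h of b, a*h = a*x
  have key : ∀ h : R, b * h * b = b → star (b * h) = b * h → a * h = a * x := by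
    intro h hbh hsym
    have hs : star (a * h) = a * x := by
      calc star (a * h) = star h * star a := by rw [star_mul]
        _ = star h * (star a * (a * x)) := by rw [← hstara]
        _ = star h * (star a * a) * x := by noncomm_ring
        _ = star h * (star b * a) * x := by rw [hba]
        _ = star (b * h) * (a * x) := by rw [star_mul]; noncomm_ring
        _ = (b * h) * (a * x) := by rw [hsym]
        _ = (b * h * b) * c * x := by rw [hc]; noncomm_ring
        _ = a * x := by rw [hbh, ← hc]
    have := congrArg star hs
    rw [star_star, hx2] at this
    exact this
  have main : ∀ h : R, b * h * b = b → star (b * h) = b * h →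
      a * h * a = a ∧ star (a * h) = a * h := by
    intro h hbh hsym
    have hah := key h hbh hsym
    constructor
    · rw [hah, hx1]
    · rw [hah, hx2]
  refine ⟨?_, fun h hh => main h hh.1 hh.2⟩
  intro h ⟨hbh, _, hsym⟩
  obtain ⟨haha, hsa⟩ := main h hbh hsym
  refine ⟨?_, ?_, ?_⟩
  · calc a * (h * a * h) * a = (a * h * a) * h * a := by noncomm_ring
      _ = a := by rw [haha, haha]
  · have hk : a * (h * a * h) = a * h := by
      calc a * (h * a * h) = (a * h * a) * h := by noncomm_ring
        _ = a * h := by rw [haha]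
    calc (h * a * h) * a * (h * a * h) = h * (a * (h * a * h)) * a * h := by noncomm_ring
      _ = h * (a * h) * a * h := by rw [hk]
      _ = h * (a * h * a) * h := by noncomm_ring
      _ = h * a * h := by rw [haha]
  · calc star (a * (h * a * h)) = star ((a * h * a) * h) := by noncomm_ring
      _ = star (a * h) := by rw [haha]
      _ = a * h := hsa
      _ = (a * h * a) * h := by rw [haha]
      _ = a * (h * a * h) := by noncomm_ring
end

section
/- Let R be a unital ring with involution and let a, b ∈ R each possess a {1,3}-inverse. Then a *≤ b (left-star order) if and only if b{1,3} ⊆ a{1,3}, i.e., if and only if every {1,3}-inverse of b is a {1,3}-inverse of a. -/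
/-- For `a, b` each possessing a `{1,3}`-inverse: `a *≤ b` iff `b{1,3} ⊆ a{1,3}`. -/
theorem stmt_12 {R : Type*} [Ring R] [StarRing R] (a b : R)
    (ha : ∃ x : R, a * x * a = a ∧ star (a * x) = a * x)
    (hb : ∃ x : R, b * x * b = b ∧ star (b * x) = b * x) :
    (star a * a = star a * b ∧ ∃ c : R, a = b * c) ↔
    (∀ h : R, (b * h * b = b ∧ star (b * h) = b * h) →
      (a * h * a = a ∧ star (a * h) = a * h)) := by
  constructor
  · rintro ⟨h1, c, hc⟩ h ⟨hbh, hsh⟩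
    have hba : b * h * a = a := by
      rw [hc, show b * h * (b * c) = b * h * b * c by noncomm_ring, hbh]
    have h2 : star a * a = star b * a := by
      have := congrArg star h1
      simpa [star_mul] using this
    have h3 : star h * (star a * a) = a := by
      rw [h2, show star h * (star b * a) = (star h * star b) * a by noncomm_ring,
        ← star_mul, hsh, hba]
    have herm : star (a * h) = a * h := by
      have h4 : star a * a * h = star a := by
        have := congrArg star h3
        simpa [star_mul, mul_assoc] using this
      rw [star_mul]
      calc star h * star a = star h * (star a * a * h) := by rw [h4]
        _ = star h * (star a * a) * h := by noncomm_ring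
        _ = a * h := by rw [h3]
    refine ⟨?_, herm⟩
    calc a * h * a = star (a * h) * a := by rw [herm]
      _ = star h * (star a * a) := by rw [star_mul]; noncomm_ring
      _ = a := h3
  · intro hyp
    obtain ⟨x, hx1, hx2⟩ := hb
    obtain ⟨hax, haxh⟩ := hyp x ⟨hx1, hx2⟩
    have hbx1 : b * (x + 1 - x * b) = b * x := by
      have : b * (x * b) = b * x * b := by noncomm_ring
      rw [mul_sub, mul_add, mul_one, this, hx1]
      noncomm_ring
    obtain ⟨h1a, h1h⟩ := hyp (x + 1 - x * b)
      ⟨by rw [show b * (x + 1 - x * b) * b = (b * (x + 1 - x * b)) * b by noncomm_ring,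
          hbx1, hx1],
       by rw [hbx1, hx2]⟩
    have hua : (a - a * x * b) * a = 0 := by
      calc (a - a * x * b) * a
          = a * (x + 1 - x * b) * a - a * x * a := by noncomm_ring
        _ = a - a := by rw [h1a, hax]
        _ = 0 := sub_self a
    have huh : star (a - a * x * b) = a - a * x * b := by
      have e : a * (x + 1 - x * b) = a * x + (a - a * x * b) := by noncomm_ring
      have h5 := h1h
      rw [e, star_add, haxh] at h5
      exact add_left_cancel h5
    have hastar : star a * (a * x) = star a := by
      have := congrArg star hax
      rw [star_mul, haxh] at this
      exact this
    have haa : star a * a = star a * b := by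
      have h6 : star a * (a - a * x * b) = 0 := by
        have := congrArg star hua
        rwa [star_mul, huh, star_zero] at this
      have h7 : star a * (a * x * b) = star a * b := by
        calc star a * (a * x * b) = (star a * (a * x)) * b := by noncomm_ring
          _ = star a * b := by rw [hastar]
      calc star a * a = star a * (a - a * x * b) + star a * (a * x * b) := by noncomm_ring
        _ = star a * b := by rw [h6, h7, zero_add]
    have hbxa : b * x * a = a := by
      have h8 : star a * (b * x) = star a := by
        calc star a * (b * x) = (star a * b) * x := by noncomm_ring
          _ = (star a * a) * x := by rw [haa]
          _ = star a * (a * x) := by noncomm_ring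
          _ = star a := hastar
      have := congrArg star h8
      rwa [star_mul, hx2, star_star] at this
    exact ⟨haa, x * a, by rw [← mul_assoc, hbxa]⟩
end

section
/- Let R be a unital ring with involution. The left-star relation *≤ is a partial order on the set of elements of R possessing a {1,3}-inverse: it is reflexive (a *≤ a whenever a has a {1,3}-inverse), antisymmetric (if a and b have {1,3}-inverses, a *≤ b and b *≤ a, then a = b), and transitive (if a, b, c have {1,3}-inverses, a *≤ b and b *≤ c, then a *≤ c). -/
/-- The left-star relation is a partial order on the set of elements possessing
a `{1,3}`-inverse: reflexive, antisymmetric and transitive. -/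
theorem stmt_13 {R : Type*} [Ring R] [StarRing R] :
    (∀ a : R, (∃ x : R, a * x * a = a ∧ star (a * x) = a * x) →
      (star a * a = star a * a ∧ ∃ c : R, a = a * c)) ∧
    (∀ a b : R, (∃ x : R, a * x * a = a ∧ star (a * x) = a * x) →
      (∃ x : R, b * x * b = b ∧ star (b * x) = b * x) →
      (star a * a = star a * b ∧ ∃ c : R, a = b * c) →
      (star b * b = star b * a ∧ ∃ c : R, b = a * c) → a = b) ∧
    (∀ a b c : R, (∃ x : R, a * x * a = a ∧ star (a * x) = a * x) →
      (∃ x : R, b * x * b = b ∧ star (b * x) = b * x) →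
      (∃ x : R, c * x * c = c ∧ star (c * x) = c * x) →
      (star a * a = star a * b ∧ ∃ u : R, a = b * u) →
      (star b * b = star b * c ∧ ∃ v : R, b = c * v) →
      (star a * a = star a * c ∧ ∃ w : R, a = c * w)) := by
  refine ⟨fun a _ => ⟨rfl, 1, (mul_one a).symm⟩, ?_, ?_⟩
  · rintro a b ⟨x, hx1, hx3⟩ _ ⟨hab, _⟩ ⟨_, d, hbd⟩
    -- a = a x b
    have key : a = a * x * b := by
      have h1 : star x * (star a * a) = star x * (star a * b) := by rw [hab]
      have h2 : star (a * x) * a = star (a * x) * b := by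
        simpa [star_mul, mul_assoc] using h1
      rw [hx3] at h2
      calc a = a * x * a := hx1.symm
        _ = a * x * b := h2
    calc a = a * x * b := key
      _ = a * x * (a * d) := by rw [hbd]
      _ = a * x * a * d := by noncomm_ring
      _ = a * d := by rw [hx1]
      _ = b := hbd.symm
  · rintro a b c _ ⟨y, hy1, hy3⟩ _ ⟨hab, u, hau⟩ ⟨hbc, v, hbv⟩
    refine ⟨?_, v * u, by rw [hau, hbv, mul_assoc]⟩
    calc star a * a = star a * b := hab
      _ = star u * (star b * b) := by rw [hau, star_mul, mul_assoc]
      _ = star u * (star b * c) := by rw [hbc]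
      _ = star a * c := by rw [hau, star_mul, mul_assoc]
end

section
/- Let R be a unital ring with involution, let a, b ∈ R each possess a {1,3}-inverse, let h be a {1,2,3}-inverse of b, and set p₁ = a h, p₂ = (b − a) h, p₃ = 1 − b h, q₁ = h a, q₂ = h(b − a), q₃ = 1 − h b. If a *≤ b (left-star order), then: 1 = p₁ + p₂ + p₃ where p₁, p₂, p₃ are mutually orthogonal self-adjoint idempotents; 1 = q₁ + q₂ + q₃ where q₁, q₂, q₃ are mutually orthogonal idempotents; a = p₁ a q₁ and b = p₁ b q₁ + p₂ b q₂ with p₁ b q₁ = a and p₂ b q₂ = b − a; moreover a (h a h) = p₁, (h a h) a = q₁, (b − a)(h − h a h) = p₂, and (h − h a h)(b − a) = q₂. -/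
/-- Simultaneous diagonalization of `a` and `b` when `a *≤ b`, relative to a fixed
`{1,2,3}`-inverse `h` of `b`. -/
theorem stmt_14 {R : Type*} [Ring R] [StarRing R] (a b h : R)
    (ha : ∃ x : R, a * x * a = a ∧ star (a * x) = a * x)
    (hb : ∃ x : R, b * x * b = b ∧ star (b * x) = b * x)
    (hh : b * h * b = b ∧ h * b * h = h ∧ star (b * h) = b * h)
    (p1 p2 p3 q1 q2 q3 : R)
    (hp1 : p1 = a * h) (hp2 : p2 = (b - a) * h) (hp3 : p3 = 1 - b * h)
    (hq1 : q1 = h * a) (hq2 : q2 = h * (b - a)) (hq3 : q3 = 1 - h * b)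
    (hab : star a * a = star a * b ∧ ∃ c : R, a = b * c) :
    (1 : R) = p1 + p2 + p3 ∧
    (p1 * p1 = p1 ∧ p2 * p2 = p2 ∧ p3 * p3 = p3) ∧
    (star p1 = p1 ∧ star p2 = p2 ∧ star p3 = p3) ∧
    (p1 * p2 = 0 ∧ p2 * p1 = 0 ∧ p1 * p3 = 0 ∧ p3 * p1 = 0 ∧
      p2 * p3 = 0 ∧ p3 * p2 = 0) ∧
    (1 : R) = q1 + q2 + q3 ∧
    (q1 * q1 = q1 ∧ q2 * q2 = q2 ∧ q3 * q3 = q3) ∧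
    (q1 * q2 = 0 ∧ q2 * q1 = 0 ∧ q1 * q3 = 0 ∧ q3 * q1 = 0 ∧
      q2 * q3 = 0 ∧ q3 * q2 = 0) ∧
    (a = p1 * a * q1 ∧ b = p1 * b * q1 + p2 * b * q2 ∧
      p1 * b * q1 = a ∧ p2 * b * q2 = b - a) ∧
    (a * (h * a * h) = p1 ∧ (h * a * h) * a = q1 ∧
      (b - a) * (h - h * a * h) = p2 ∧ (h - h * a * h) * (b - a) = q2) := by
  obtain ⟨x, hx1, hx2⟩ := ha
  obtain ⟨h1, h2, h3⟩ := hh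
  obtain ⟨habs, c, hc⟩ := hab
  -- basic facts
  have bha : b * h * a = a := by
    rw [hc, ← mul_assoc, h1]
  have axb : a * x * b = a := by
    calc a * x * b = star (a * x) * b := by rw [hx2]
    _ = star x * (star a * b) := by rw [star_mul, mul_assoc]
    _ = star x * (star a * a) := by rw [habs]
    _ = star (a * x) * a := by rw [star_mul, mul_assoc]
    _ = a * x * a := by rw [hx2]
    _ = a := hx1
  have ahsa : star (a * h) = a * x := by
    calc star (a * h) = star (a * x * b * h) := by rw [axb]
    _ = star (a * x * (b * h)) := by rw [mul_assoc]
    _ = star (b * h) * star (a * x) := star_mul _ _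
    _ = b * h * (a * x) := by rw [h3, hx2]
    _ = b * h * a * x := by rw [← mul_assoc]
    _ = a * x := by rw [bha]
  have ahax : a * h = a * x := by
    have := congrArg star ahsa
    rwa [star_star, hx2] at this
  have ahsa' : star (a * h) = a * h := by rw [ahsa, ahax]
  have aha : a * h * a = a := by rw [ahax, hx1]
  have ahb : a * h * b = a := by rw [ahax, axb]
  -- right-assoc versions for simp
  have aha' : ∀ y : R, a * (h * a) = a ∧ a * (h * (a * y)) = a * y := by
    intro y
    constructor
    · rw [← mul_assoc, aha]
    · rw [← mul_assoc, ← mul_assoc, aha]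
  have ahb' : ∀ y : R, a * (h * b) = a ∧ a * (h * (b * y)) = a * y := by
    intro y
    constructor
    · rw [← mul_assoc, ahb]
    · rw [← mul_assoc, ← mul_assoc, ahb]
  have bha' : ∀ y : R, b * (h * a) = a ∧ b * (h * (a * y)) = a * y := by
    intro y
    constructor
    · rw [← mul_assoc, bha]
    · rw [← mul_assoc, ← mul_assoc, bha]
  have bhb' : ∀ y : R, b * (h * b) = b ∧ b * (h * (b * y)) = b * y := by
    intro y
    constructor
    · rw [← mul_assoc, h1]
    · rw [← mul_assoc, ← mul_assoc, h1]
  have hbh' : ∀ y : R, h * (b * h) = h ∧ h * (b * (h * y)) = h * y := by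
    intro y
    constructor
    · rw [← mul_assoc, h2]
    · rw [← mul_assoc, ← mul_assoc, h2]
  have s1 := fun y => (aha' y).1
  have s2 := fun y => (aha' y).2
  have s3 := fun y => (ahb' y).1
  have s4 := fun y => (ahb' y).2
  have s5 := fun y => (bha' y).1
  have s6 := fun y => (bha' y).2
  have s7 := fun y => (bhb' y).1
  have s8 := fun y => (bhb' y).2
  have s9 := fun y => (hbh' y).1
  have s10 := fun y => (hbh' y).2
  have starp2 : star ((b - a) * h) = (b - a) * h := by
    rw [sub_mul, star_sub, h3, ahsa', ← sub_mul]
  have starp3 : star (1 - b * h) = 1 - b * h := by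
    rw [star_sub, star_one, h3]
  subst hp1 hp2 hp3 hq1 hq2 hq3
  refine ⟨by noncomm_ring, ⟨?_, ?_, ?_⟩, ⟨ahsa', starp2, starp3⟩, ⟨?_, ?_, ?_, ?_, ?_, ?_⟩,
    by noncomm_ring, ⟨?_, ?_, ?_⟩, ⟨?_, ?_, ?_, ?_, ?_, ?_⟩, ⟨?_, ?_, ?_, ?_⟩,
    ⟨?_, ?_, ?_, ?_⟩⟩ <;>
  · simp only [mul_sub, sub_mul, one_mul, mul_one, mul_assoc,
      s1 0, s2, s3 0, s4, s5 0, s6, s7 0, s8, s9 0, s10]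
    try noncomm_ring
end

section
/- Let R be a unital ring with involution, let a ∈ R possess a {1,4}-inverse, and let b ∈ R. Then a <^{†−} b if and only if a ≤* b; that is, there exists a {1,2,4}-inverse g of a with a g = b g and g a = g b if and only if a a* = b a* and a = c b for some c ∈ R. -/
/-- For `a` possessing a `{1,4}`-inverse, `a <^{†−} b` iff `a ≤* b` (right-star order). -/
theorem stmt_15 {R : Type*} [Ring R] [StarRing R] (a b : R)
    (ha : ∃ x : R, a * x * a = a ∧ star (x * a) = x * a) :
    (∃ g : R, (a * g * a = a ∧ g * a * g = g ∧ star (g * a) = g * a) ∧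
      a * g = b * g ∧ g * a = g * b) ↔
    (a * star a = b * star a ∧ ∃ c : R, a = c * b) := by
  constructor
  · rintro ⟨g, ⟨h1, h2, h3⟩, h4, h5⟩
    have hga : star a * star g = g * a := by rw [← star_mul, h3]
    have key : star a = g * a * star a := by
      calc star a = star (a * g * a) := by rw [h1]
        _ = star a * (star g * star a) := by rw [star_mul, star_mul]
        _ = (star a * star g) * star a := by rw [mul_assoc]
        _ = g * a * star a := by rw [hga]
    constructor
    · calc a * star a = (a * g * a) * star a := by rw [h1]
        _ = (a * g) * (a * star a) := by rw [mul_assoc (a*g) a (star a)]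
        _ = (b * g) * (a * star a) := by rw [h4]
        _ = b * (g * a * star a) := by rw [mul_assoc b g (a * star a), ← mul_assoc g a (star a)]
        _ = b * star a := by rw [← key]
    · exact ⟨a * g, by rw [mul_assoc, ← h5, ← mul_assoc, h1]⟩
  · rintro ⟨hab, c, hc⟩
    obtain ⟨x, hx1, hx4⟩ := ha
    have hax : star a * star x = x * a := by rw [← star_mul, hx4]
    have hbxa : b * x * a = a := by
      calc b * x * a = b * (x * a) := by rw [mul_assoc]
        _ = b * (star a * star x) := by rw [hax]
        _ = b * star a * star x := by rw [mul_assoc]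
        _ = a * star a * star x := by rw [hab]
        _ = a * (star a * star x) := by rw [mul_assoc]
        _ = a * (x * a) := by rw [hax]
        _ = a := by rw [← mul_assoc, hx1]
    have hca : c * a = a := by
      calc c * a = c * (b * x * a) := by rw [hbxa]
        _ = c * b * x * a := by simp [mul_assoc]
        _ = a * x * a := by rw [← hc]
        _ = a := hx1
    have e5 : c * b = a := hc.symm
    have e1 : ∀ t : R, a * (x * (a * t)) = a * t := fun t => by
      rw [← mul_assoc, ← mul_assoc, hx1]
    have e1' : a * (x * a) = a := by rw [← mul_assoc, hx1]
    have e2 : ∀ t : R, b * (x * (a * t)) = a * t := fun t => by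
      rw [← mul_assoc, ← mul_assoc, hbxa]
    have e3 : ∀ t : R, c * (a * t) = a * t := fun t => by rw [← mul_assoc, hca]
    refine ⟨x * a * x * c, ⟨?_, ?_, ?_⟩, ?_, ?_⟩
    · simp only [mul_assoc, hca, e1, e1']
    · simp only [mul_assoc, e3, e1]
    · simp only [mul_assoc, hca, e1']
      exact hx4
    · simp only [mul_assoc, e1, e2]
    · simp only [mul_assoc, hca, e5, e1']
end

section
/- Let R be a unital ring with involution and let a, b ∈ R each possess a {1,4}-inverse. Then a ≤* b (right-star order) if and only if b{1,4} ⊆ a{1,4}, i.e., if and only if every {1,4}-inverse of b is a {1,4}-inverse of a. -/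
/-- For `a, b` each possessing a `{1,4}`-inverse: `a ≤* b` iff `b{1,4} ⊆ a{1,4}`. -/
theorem stmt_16 {R : Type*} [Ring R] [StarRing R] (a b : R)
    (ha : ∃ x : R, a * x * a = a ∧ star (x * a) = x * a)
    (hb : ∃ x : R, b * x * b = b ∧ star (x * b) = x * b) :
    (a * star a = b * star a ∧ ∃ c : R, a = c * b) ↔
    (∀ h : R, (b * h * b = b ∧ star (h * b) = h * b) →
      (a * h * a = a ∧ star (h * a) = h * a)) := by
  constructor
  · rintro ⟨h1, c, hc⟩ h ⟨hx1, hx4⟩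
    -- a * (h * b) = a
    have hab : a * (h * b) = a := by
      rw [hc]
      calc c * b * (h * b) = c * (b * h * b) := by noncomm_ring
        _ = c * b := by rw [hx1]
    -- star a = h * (a * star a)
    have hsa : star a = h * (a * star a) := by
      conv_lhs => rw [← hab]
      rw [star_mul, hx4, mul_assoc, ← h1]
    have hz : star (h * a) = h * a := by
      have e1 : star (h * a) = (h * a) * star (h * a) := by
        rw [star_mul]
        conv_lhs => rw [hsa]
        noncomm_ring
      have e2 : h * a = star (h * a) := by
        conv_lhs => rw [← star_star (h * a), e1, star_mul, star_star]
        exact e1.symm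
      exact e2.symm
    constructor
    · -- a * h * a = a
      have step : a * h * a = a * star a * star h := by
        rw [mul_assoc, ← hz, star_mul]
        noncomm_ring
      have step2 : a * star a * star h = a := by
        have := congrArg star hsa
        rw [star_star, star_mul, star_mul, star_star] at this
        exact this.symm
      rw [step, step2]
    · exact hz
  · intro H
    obtain ⟨h0, hb1, hb4⟩ := hb
    have mem : ∀ t : R, b * (h0 + t * (1 - b * h0)) * b = b ∧
        star ((h0 + t * (1 - b * h0)) * b) = (h0 + t * (1 - b * h0)) * b := by
      intro t
      have hyb : (h0 + t * (1 - b * h0)) * b = h0 * b := by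
        have e : (h0 + t * (1 - b * h0)) * b = h0 * b + t * (b - b * h0 * b) := by
          noncomm_ring
        rw [e, hb1, sub_self, mul_zero, add_zero]
      refine ⟨?_, ?_⟩
      · rw [mul_assoc, hyb, ← mul_assoc, hb1]
      · rw [hyb]; exact hb4
    obtain ⟨ha1, ha4⟩ := H h0 ⟨hb1, hb4⟩
    obtain ⟨e1a, e1s⟩ := H _ (mem 1)
    -- u := a - b * (h0 * a)
    have hau : a * (a - b * (h0 * a)) = 0 := by
      have expand : a * (h0 + 1 * (1 - b * h0)) * a
          = a * h0 * a + a * (a - b * (h0 * a)) := by noncomm_ring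
      have := e1a
      rw [expand, ha1] at this
      exact add_eq_left.mp this
    have hsu : star (a - b * (h0 * a)) = a - b * (h0 * a) := by
      have expand : (h0 + 1 * (1 - b * h0)) * a = h0 * a + (a - b * (h0 * a)) := by
        noncomm_ring
      rw [expand, star_add, ha4] at e1s
      exact add_left_cancel e1s
    have husa : (a - b * (h0 * a)) * star a = 0 := by
      have e : star (a * (a - b * (h0 * a))) = 0 := by rw [hau, star_zero]
      rw [star_mul, hsu] at e
      exact e
    have hsa : star a = h0 * a * star a := by
      conv_lhs => rw [← ha1, mul_assoc, star_mul, ha4]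
    have g1 : a * star a = b * star a := by
      have e : a * star a - b * (h0 * a) * star a = 0 := by
        rw [← sub_mul]; exact husa
      have e' : a * star a = b * (h0 * a) * star a := sub_eq_zero.mp e
      rw [e', mul_assoc, ← hsa]
    refine ⟨g1, ⟨a * h0, ?_⟩⟩
    have e : (1 - h0 * b) * star a = 0 := by
      have e0 : (1 - h0 * b) * star a = star a - h0 * (b * star a) := by noncomm_ring
      rw [e0, ← g1, ← mul_assoc, ← hsa, sub_self]
    have e2 : a * (1 - h0 * b) = 0 := by
      have := congrArg star e
      rw [star_zero, star_mul, star_star, star_sub, star_one, hb4] at this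
      exact this
    have : a - a * (h0 * b) = 0 := by
      have e3 : a * (1 - h0 * b) = a - a * (h0 * b) := by noncomm_ring
      rw [← e3]; exact e2
    have := sub_eq_zero.mp this
    rw [← mul_assoc] at this
    exact this
end

section
/- Let R be a unital ring with involution, let a ∈ R be Moore-Penrose invertible, and let b ∈ R. Then a is below b in the star order (a a* = b a* and a* a = a* b) if and only if a *≤ b (left-star order: a* a = a* b and a = b c for some c ∈ R) and a ≤* b (right-star order: a a* = b a* and a = c b for some c ∈ R). -/
/-- For `a` Moore-Penrose invertible: `a ≤★ b` (star order) iff `a *≤ b` and `a ≤* b`. -/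
theorem stmt_17 {R : Type*} [Ring R] [StarRing R] (a b : R)
    (ha : ∃ x : R, a * x * a = a ∧ x * a * x = x ∧
      star (a * x) = a * x ∧ star (x * a) = x * a) :
    (a * star a = b * star a ∧ star a * a = star a * b) ↔
    ((star a * a = star a * b ∧ ∃ c : R, a = b * c) ∧
     (a * star a = b * star a ∧ ∃ c : R, a = c * b)) := by
  obtain ⟨x, h1, h2, h3, h4⟩ := ha
  constructor
  · rintro ⟨hr, hl⟩
    refine ⟨⟨hl, x * a, ?_⟩, hr, a * x, ?_⟩
    · -- a = b * (x * a), from a a* = b a*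
      have : a * star (x * a) = b * star (x * a) := by
        rw [star_mul]; rw [← mul_assoc, ← mul_assoc, hr]
      rw [h4] at this
      calc a = a * (x * a) := by rw [← mul_assoc, h1]
        _ = b * (x * a) := this
    · -- a = (a * x) * b, from a* a = a* b
      have : star (a * x) * a = star (a * x) * b := by
        rw [star_mul]; rw [mul_assoc, mul_assoc, hl]
      rw [h3] at this
      exact h1.symm.trans this
  · rintro ⟨⟨hl, _⟩, hr, _⟩
    exact ⟨hr, hl⟩
end

section
/- Let A be an m × n complex matrix and X an n × m complex matrix. The following are equivalent: (i) X is a {1,2,3}-inverse of A (AXA = A, XAX = X, (AX)* = AX, where * is the conjugate transpose); (ii) AXA = A, XAX = X, and the null space of X equals the null space of A*; (iii) AXA = A and the null space of A* is contained in the null space of X; (iv) XAX = X and the null space of X is contained in the null space of A*. -/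
open Matrix in
lemma ker_mul_aux {m n p q : ℕ} (Y : Matrix (Fin p) (Fin m) ℂ)
    (Z : Matrix (Fin n) (Fin m) ℂ) (B : Matrix (Fin m) (Fin q) ℂ)
    (h : {v : Fin m → ℂ | Y.mulVec v = 0} ⊆ {v : Fin m → ℂ | Z.mulVec v = 0})
    (hB : Y * B = 0) : Z * B = 0 := by
  ext i j
  have hcol : Y.mulVec (fun k => B k j) = 0 := by
    funext i'
    have := congrFun (congrFun hB i') j
    simpa [Matrix.mul_apply, Matrix.mulVec, dotProduct] using this
  have hmem := h hcol
  simp only [Set.mem_setOf_eq] at hmem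
  have := congrFun hmem i
  simpa [Matrix.mul_apply, Matrix.mulVec, dotProduct] using this

open Matrix in
/-- Characterizations of `{1,2,3}`-inverses of a complex matrix via null spaces. -/
theorem stmt_18 {m n : ℕ} (A : Matrix (Fin m) (Fin n) ℂ)
    (X : Matrix (Fin n) (Fin m) ℂ) :
    ((A * X * A = A ∧ X * A * X = X ∧ (A * X)ᴴ = A * X) ↔
      (A * X * A = A ∧ X * A * X = X ∧
        {v : Fin m → ℂ | X.mulVec v = 0} = {v : Fin m → ℂ | Aᴴ.mulVec v = 0})) ∧
    ((A * X * A = A ∧ X * A * X = X ∧ (A * X)ᴴ = A * X) ↔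
      (A * X * A = A ∧
        {v : Fin m → ℂ | Aᴴ.mulVec v = 0} ⊆ {v : Fin m → ℂ | X.mulVec v = 0})) ∧
    ((A * X * A = A ∧ X * A * X = X ∧ (A * X)ᴴ = A * X) ↔
      (X * A * X = X ∧
        {v : Fin m → ℂ | X.mulVec v = 0} ⊆ {v : Fin m → ℂ | Aᴴ.mulVec v = 0})) := by
  -- (i) implies ker X ⊆ ker Aᴴ
  have h1 : (A * X * A = A ∧ X * A * X = X ∧ (A * X)ᴴ = A * X) →
      {v : Fin m → ℂ | X.mulVec v = 0} ⊆ {v : Fin m → ℂ | Aᴴ.mulVec v = 0} := by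
    rintro ⟨h13, _, hH⟩ v hv
    have hH' : Xᴴ * Aᴴ = A * X := by simpa [conjTranspose_mul] using hH
    have hkey : Aᴴ * (A * X) = Aᴴ := by
      have := congrArg conjTranspose h13
      simp only [conjTranspose_mul] at this
      rwa [hH'] at this
    simp only [Set.mem_setOf_eq] at hv ⊢
    rw [← hkey, ← Matrix.mulVec_mulVec, ← Matrix.mulVec_mulVec, hv,
      Matrix.mulVec_zero, Matrix.mulVec_zero]
  -- (i) implies ker Aᴴ ⊆ ker X
  have h2 : (A * X * A = A ∧ X * A * X = X ∧ (A * X)ᴴ = A * X) →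
      {v : Fin m → ℂ | Aᴴ.mulVec v = 0} ⊆ {v : Fin m → ℂ | X.mulVec v = 0} := by
    rintro ⟨_, h2', hH⟩ v hv
    have hH' : Xᴴ * Aᴴ = A * X := by simpa [conjTranspose_mul] using hH
    have hkey : X * (Xᴴ * Aᴴ) = X := by
      rw [hH', ← Matrix.mul_assoc]; exact h2'
    simp only [Set.mem_setOf_eq] at hv ⊢
    rw [← hkey, ← Matrix.mulVec_mulVec, ← Matrix.mulVec_mulVec, hv,
      Matrix.mulVec_zero, Matrix.mulVec_zero]
  -- AXA = A and ker Aᴴ ⊆ ker X imply (i)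
  have h3 : (A * X * A = A ∧
      {v : Fin m → ℂ | Aᴴ.mulVec v = 0} ⊆ {v : Fin m → ℂ | X.mulVec v = 0}) →
      (A * X * A = A ∧ X * A * X = X ∧ (A * X)ᴴ = A * X) := by
    rintro ⟨h13, hsub⟩
    have hAXA' : Aᴴ * (Xᴴ * Aᴴ) = Aᴴ := by
      have := congrArg conjTranspose h13
      simpa [conjTranspose_mul] using this
    have hz : Aᴴ * (1 - Xᴴ * Aᴴ) = 0 := by
      rw [Matrix.mul_sub, Matrix.mul_one, hAXA', sub_self]
    have hXz : X * (1 - Xᴴ * Aᴴ) = 0 := ker_mul_aux Aᴴ X _ hsub hz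
    have hX : X * (Xᴴ * Aᴴ) = X := by
      rw [Matrix.mul_sub, Matrix.mul_one, sub_eq_zero] at hXz
      exact hXz.symm
    have hH : (A * X)ᴴ = A * X := by
      conv_lhs => rw [← hX]
      conv_rhs => rw [← hX]
      simp [conjTranspose_mul, conjTranspose_conjTranspose, Matrix.mul_assoc]
    have hH' : Xᴴ * Aᴴ = A * X := by simpa [conjTranspose_mul] using hH
    have hAAX : Aᴴ * (A * X) = Aᴴ := by rwa [hH'] at hAXA'
    have hXAX : X * A * X = X := by
      calc X * A * X = X * (A * X) := Matrix.mul_assoc _ _ _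
        _ = (X * (Xᴴ * Aᴴ)) * (A * X) := by rw [hX]
        _ = X * (Xᴴ * (Aᴴ * (A * X))) := by simp [Matrix.mul_assoc]
        _ = X * (Xᴴ * Aᴴ) := by rw [hAAX]
        _ = X := hX
    exact ⟨h13, hXAX, hH⟩
  -- XAX = X and ker X ⊆ ker Aᴴ imply (i)
  have h4 : (X * A * X = X ∧
      {v : Fin m → ℂ | X.mulVec v = 0} ⊆ {v : Fin m → ℂ | Aᴴ.mulVec v = 0}) →
      (A * X * A = A ∧ X * A * X = X ∧ (A * X)ᴴ = A * X) := by
    rintro ⟨h2', hsub⟩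
    have hz : X * (1 - A * X) = 0 := by
      rw [Matrix.mul_sub, Matrix.mul_one, ← Matrix.mul_assoc, h2', sub_self]
    have hAz : Aᴴ * (1 - A * X) = 0 := ker_mul_aux X Aᴴ _ hsub hz
    have hA : Aᴴ * (A * X) = Aᴴ := by
      rw [Matrix.mul_sub, Matrix.mul_one, sub_eq_zero] at hAz
      exact hAz.symm
    have hA' : Xᴴ * (Aᴴ * A) = A := by
      have := congrArg conjTranspose hA
      simpa [conjTranspose_mul, Matrix.mul_assoc] using this
    have hPP : Xᴴ * Aᴴ * (A * X) = A * X := by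
      calc Xᴴ * Aᴴ * (A * X) = Xᴴ * (Aᴴ * A) * X := by simp [Matrix.mul_assoc]
        _ = A * X := by rw [hA']
    have hH : (A * X)ᴴ = A * X := by
      have e1 : Xᴴ * (Aᴴ * (A * X)) = A * X := by
        rw [← Matrix.mul_assoc]; exact hPP
      have e2 : Xᴴ * (Aᴴ * (A * X)) = Xᴴ * Aᴴ := by rw [hA]
      rw [conjTranspose_mul]
      exact e2.symm.trans e1
    have hAXA : A * X * A = A := by
      calc A * X * A = (A * X)ᴴ * A := by rw [hH]
        _ = Xᴴ * (Aᴴ * A) := by rw [conjTranspose_mul, Matrix.mul_assoc]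
        _ = A := hA'
    exact ⟨hAXA, h2', hH⟩
  refine ⟨⟨fun h => ⟨h.1, h.2.1, Set.Subset.antisymm (h1 h) (h2 h)⟩,
      fun h => h3 ⟨h.1, by rw [← h.2.2]⟩⟩,
    ⟨fun h => ⟨h.1, h2 h⟩, h3⟩,
    ⟨fun h => ⟨h.2.1, h1 h⟩, h4⟩⟩
end

section
/- Let R be a unital ring with involution and let a ∈ R possess a {1,2,4}-inverse. Then a{1,2,4} = { a* s : s is a {1}-inverse of a a* }, i.e., g is a {1,2,4}-inverse of a if and only if g = a* s for some s ∈ R with (a a*) s (a a*) = a a*. -/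
/-- `a{1,2,4} = { a* s : s ∈ (a a*){1} }` in a ring with involution, provided `a`
has a `{1,2,4}`-inverse. -/
theorem stmt_19 {R : Type*} [Ring R] [StarRing R] (a : R)
    (ha : ∃ x : R, a * x * a = a ∧ x * a * x = x ∧ star (x * a) = x * a) (g : R) :
    (a * g * a = a ∧ g * a * g = g ∧ star (g * a) = g * a) ↔
    ∃ s : R, (a * star a) * s * (a * star a) = a * star a ∧ g = star a * s := by
  obtain ⟨x, hx1, hx2, hx3⟩ := ha
  constructor
  · rintro ⟨h1, h2, h3⟩
    have hga : star a * star g = g * a := by rw [← star_mul, h3]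
    refine ⟨star g * g, ?_, ?_⟩
    · calc a * star a * (star g * g) * (a * star a)
          = a * (star a * star g) * ((g * a) * star a) := by noncomm_ring
        _ = a * (g * a) * ((g * a) * star a) := by rw [hga]
        _ = (a * g * a) * g * (a * star a) := by noncomm_ring
        _ = a * g * (a * star a) := by rw [h1]
        _ = (a * g * a) * star a := by noncomm_ring
        _ = a * star a := by rw [h1]
    · calc g = g * a * g := h2.symm
        _ = star (g * a) * g := by rw [h3]
        _ = star a * (star g * g) := by rw [star_mul, mul_assoc]
  · rintro ⟨s, hs, rfl⟩
    have ha' : a = (a * star a) * star x := by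
      calc a = a * (x * a) := by rw [← mul_assoc, hx1]
        _ = a * star (x * a) := by rw [hx3]
        _ = (a * star a) * star x := by rw [star_mul, ← mul_assoc]
    have ha'' : star a = x * (a * star a) := by
      calc star a = star ((a * star a) * star x) := by rw [← ha']
        _ = x * (a * star a) := by
            rw [star_mul, star_star, star_mul, star_star]
    refine ⟨?_, ?_, ?_⟩
    · calc a * (star a * s) * a
          = (a * star a) * s * ((a * star a) * star x) := by
            nth_rewrite 3 [ha']; noncomm_ring
        _ = ((a * star a) * s * (a * star a)) * star x := by noncomm_ring
        _ = (a * star a) * star x := by rw [hs]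
        _ = a := ha'.symm
    · calc star a * s * a * (star a * s)
          = (x * (a * star a)) * s * ((a * star a) * s) := by
            rw [← ha'']; noncomm_ring
        _ = x * ((a * star a) * s * (a * star a)) * s := by noncomm_ring
        _ = x * (a * star a) * s := by rw [hs]
        _ = star a * s := by rw [← ha'']
    · have key : star a * s * a = x * (a * star a) * star x := by
        calc star a * s * a
            = (x * (a * star a)) * s * ((a * star a) * star x) := by
              rw [← ha'', ← ha']
          _ = x * ((a * star a) * s * (a * star a)) * star x := by noncomm_ring
          _ = x * (a * star a) * star x := by rw [hs]
      rw [key, star_mul, star_mul, star_star, star_mul, star_star]; noncomm_ring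
end
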